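/- Let f : ℝ → ℝ be twice differentiable with f''(ω) = f(ω)·f'(ω) for all ω. Define ξ(t,x,v) = f(x + v) and θ(t,x,v) = f(x + v) on ℝ³. Then the pair (ξ, θ) satisfies the determining system for reduction operators of the potential fast diffusion equation on ℝ³. (This verifies Case 2, Q = ∂_t + f(x+v)(∂_x + ∂_v), of the classification theorem of non-Lie reduction operators.) -/
import Mathlib


/-- Partial derivative with respect to the first variable `t`. -/
noncomputable def pt3 (f : ℝ × ℝ × ℝ → ℝ) (p : ℝ × ℝ × ℝ) : ℝ :=
  deriv (fun t => f (t, p.2.1, p.2.2)) p.1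

/-- Partial derivative with respect to the second variable `x`. -/
noncomputable def px3 (f : ℝ × ℝ × ℝ → ℝ) (p : ℝ × ℝ × ℝ) : ℝ :=
  deriv (fun x => f (p.1, x, p.2.2)) p.2.1

/-- Partial derivative with respect to the third variable `v`. -/
noncomputable def pv3 (f : ℝ × ℝ × ℝ → ℝ) (p : ℝ × ℝ × ℝ) : ℝ :=
  deriv (fun v => f (p.1, p.2.1, v)) p.2.2

/-- The determining system for reduction operators `Q = ∂_t + ξ∂_x + θ∂_v`
of the potential fast diffusion equation `v_t = v_xx / v_x`:
(i) `ξ_vv = ξ ξ_v`; (ii) `ξ_t = 2ξ_xv − θ_vv − θ_v ξ + θ ξ_v − ξ ξ_x`;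
(iii) `θ_xx = θ θ_x`; (iv) `θ_t = 2θ_xv − ξ_xx − ξ_x θ + ξ θ_x − θ θ_v`. -/
def DeterminingSystem (ξ θ : ℝ × ℝ × ℝ → ℝ) (Ω : Set (ℝ × ℝ × ℝ)) : Prop :=
  ∀ p ∈ Ω,
    pv3 (pv3 ξ) p = ξ p * pv3 ξ p ∧
    pt3 ξ p =
      2 * pv3 (px3 ξ) p - pv3 (pv3 θ) p - pv3 θ p * ξ p + θ p * pv3 ξ p - ξ p * px3 ξ p ∧
    px3 (px3 θ) p = θ p * px3 θ p ∧
    pt3 θ p =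
      2 * pv3 (px3 θ) p - px3 (px3 ξ) p - px3 ξ p * θ p + ξ p * px3 θ p - θ p * pv3 θ p

/-- Case 2 of the classification of non-Lie reduction operators of the potential fast
diffusion equation: `Q = ∂_t + f(x + v)(∂_x + ∂_v)` with `f'' = f f'`. -/
theorem reduction_operator_case2
    (f : ℝ → ℝ)
    (hf : ∀ ω : ℝ, DifferentiableAt ℝ f ω)
    (hf' : ∀ ω : ℝ, DifferentiableAt ℝ (deriv f) ω)
    (hode : ∀ ω : ℝ, deriv (deriv f) ω = f ω * deriv f ω) :
    DeterminingSystem (fun p => f (p.2.1 + p.2.2)) (fun p => f (p.2.1 + p.2.2))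
      Set.univ := by
  have hx : px3 (fun p : ℝ × ℝ × ℝ => f (p.2.1 + p.2.2)) =
      fun p => deriv f (p.2.1 + p.2.2) := by
    funext p; simp [px3, deriv_comp_add_const]
  have hv : pv3 (fun p : ℝ × ℝ × ℝ => f (p.2.1 + p.2.2)) =
      fun p => deriv f (p.2.1 + p.2.2) := by
    funext p; simp [pv3, deriv_comp_const_add]
  have hx' : px3 (fun p : ℝ × ℝ × ℝ => deriv f (p.2.1 + p.2.2)) =
      fun p => deriv (deriv f) (p.2.1 + p.2.2) := by
    funext p; simp [px3, deriv_comp_add_const]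
  have hv' : pv3 (fun p : ℝ × ℝ × ℝ => deriv f (p.2.1 + p.2.2)) =
      fun p => deriv (deriv f) (p.2.1 + p.2.2) := by
    funext p; simp [pv3, deriv_comp_const_add]
  intro p _
  refine ⟨?_, ?_, ?_, ?_⟩ <;>
    simp only [pt3, hx, hv, hx', hv', hode, deriv_const'] <;> ring
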